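/- Let (Ω, 𝓑, μ) be a probability space and M a dense linear order without endpoints, and work with measurable functions Ω → M modulo null sets. Suppose a, b are measurable functions with μ({ω : a(ω) = b(ω)}) = 0 and both events {a < b} and {b < a} have positive measure. Let c = max(a,b) and d = min(a,b) pointwise. Then c is not a.e. equal to a and not a.e. equal to b, d is not a.e. equal to a and not a.e. equal to b, while {c, d} together with {a, b} satisfy: max(a,b) = c, min(a,b) = d, and a, b are each a.e. equal to a function obtained from c, d by the choosing function ℓ on the events {a < b}, {b < a}. -/

import Mathlib

open MeasureTheory
open scoped Classical

section LinearOrder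

variable {M : Type*} [LinearOrder M] {x y : M}

lemma max_ne_left_of_lt (h : x < y) : max x y ≠ x := by
  rw [max_eq_right h.le]; exact h.ne'

lemma max_ne_right_of_lt (h : y < x) : max x y ≠ y := by
  rw [max_eq_left h.le]; exact h.ne'

lemma min_ne_left_of_lt (h : y < x) : min x y ≠ x := by
  rw [min_eq_right h.le]; exact h.ne

lemma min_ne_right_of_lt (h : x < y) : min x y ≠ y := by
  rw [min_eq_left h.le]; exact h.ne

lemma ite_lt_min_max (x y : M) : (if x < y then min x y else max x y) = x := by
  split_ifs with h
  · exact min_eq_left h.le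
  · exact max_eq_left (not_lt.mp h)

lemma ite_lt_max_min (x y : M) : (if x < y then max x y else min x y) = y := by
  split_ifs with h
  · exact max_eq_right h.le
  · exact min_eq_right (not_lt.mp h)

end LinearOrder

lemma measure_setOf_ne_ne_zero {Ω β : Type*} [MeasurableSpace Ω] {μ : Measure Ω} {s : Set Ω}
    {f g : Ω → β} (hs : 0 < μ s) (hfg : ∀ ω ∈ s, f ω ≠ g ω) : μ {ω | f ω ≠ g ω} ≠ 0 :=
  (measure_pos_of_superset hfg hs.ne').ne'

theorem stmt14_general {Ω M : Type*} [MeasurableSpace Ω] (μ : Measure Ω)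
    [LinearOrder M]
    (a b c d : Ω → M)
    (hlt : 0 < μ {ω | a ω < b ω}) (hgt : 0 < μ {ω | b ω < a ω})
    (hc : ∀ ω, c ω = max (a ω) (b ω)) (hd : ∀ ω, d ω = min (a ω) (b ω)) :
    μ {ω | c ω ≠ a ω} ≠ 0 ∧ μ {ω | c ω ≠ b ω} ≠ 0 ∧
    μ {ω | d ω ≠ a ω} ≠ 0 ∧ μ {ω | d ω ≠ b ω} ≠ 0 ∧
    μ {ω | a ω ≠ (if a ω < b ω then d ω else c ω)} = 0 ∧
    μ {ω | b ω ≠ (if a ω < b ω then c ω else d ω)} = 0 := by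
  obtain rfl : c = fun ω => max (a ω) (b ω) := funext hc
  obtain rfl : d = fun ω => min (a ω) (b ω) := funext hd
  exact ⟨measure_setOf_ne_ne_zero hlt fun _ => max_ne_left_of_lt,
    measure_setOf_ne_ne_zero hgt fun _ => max_ne_right_of_lt,
    measure_setOf_ne_ne_zero hgt fun _ => min_ne_left_of_lt,
    measure_setOf_ne_ne_zero hlt fun _ => min_ne_right_of_lt,
    by simp only [ite_lt_min_max, ne_eq, not_true_eq_false, Set.ofPred_false, measure_empty],
    by simp only [ite_lt_max_min, ne_eq, not_true_eq_false, Set.ofPred_false, measure_empty]⟩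

/-- (Core of the failure of exchange in DLO^R.)  Over a probability space, let
`a, b : Ω → M` take values in a dense linear order without endpoints, with
`μ {a = b} = 0` and both `{a < b}` and `{b < a}` of positive measure.  Let `c = max(a,b)` and
`d = min(a,b)` pointwise.  Then `c` is a.e. equal to neither `a` nor `b`, `d` is a.e. equal to
neither `a` nor `b`, while `a` and `b` are each a.e. equal to the function obtained from
`c, d` by the choosing function `ℓ` on the events `{a < b}`, `{b < a}`. -/
theorem stmt14 {Ω M : Type*} [MeasurableSpace Ω] (μ : Measure Ω) [IsProbabilityMeasure μ]
    [LinearOrder M] [DenselyOrdered M] [NoMinOrder M] [NoMaxOrder M] [Nonempty M]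
    (a b c d : Ω → M)
    (hab : μ {ω | a ω = b ω} = 0)
    (hlt : 0 < μ {ω | a ω < b ω}) (hgt : 0 < μ {ω | b ω < a ω})
    (hc : ∀ ω, c ω = max (a ω) (b ω)) (hd : ∀ ω, d ω = min (a ω) (b ω)) :
    μ {ω | c ω ≠ a ω} ≠ 0 ∧ μ {ω | c ω ≠ b ω} ≠ 0 ∧
    μ {ω | d ω ≠ a ω} ≠ 0 ∧ μ {ω | d ω ≠ b ω} ≠ 0 ∧
    μ {ω | a ω ≠ (if a ω < b ω then d ω else c ω)} = 0 ∧
    μ {ω | b ω ≠ (if a ω < b ω then c ω else d ω)} = 0 :=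
  stmt14_general μ a b c d hlt hgt hc hd
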